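/- Let K be a field of characteristic zero. In the planar Cremona group Cr₂(K), let s be the automorphism with s(x) = x + 1, s(y) = y, and for each n ≥ 0 let aₙ be the automorphism with aₙ(x) = x, aₙ(y) = y + xⁿ. Let Γ_∞ be the subgroup of Cr₂(K) generated by s together with all aₙ, n ≥ 0. Then Γ_∞ is locally nilpotent but not nilpotent: every finitely generated subgroup of Γ_∞ is nilpotent, while Γ_∞ itself is not nilpotent. -/

import Mathlib

open MvPolynomial

/-- The rational function field `K(X,Y)`, realized as the fraction field of the polynomial
ring in two variables. Its group of `K`-algebra automorphisms is the planar Cremona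
group `Cr₂(K)`. -/
noncomputable abbrev CremonaField (K : Type*) [Field K] : Type _ :=
  FractionRing (MvPolynomial (Fin 2) K)

/-- The image of the first variable in `K(X,Y)`. -/
noncomputable def genX (K : Type*) [Field K] : CremonaField K :=
  algebraMap (MvPolynomial (Fin 2) K) (CremonaField K) (X 0)

/-- The image of the second variable in `K(X,Y)`. -/
noncomputable def genY (K : Type*) [Field K] : CremonaField K :=
  algebraMap (MvPolynomial (Fin 2) K) (CremonaField K) (X 1)

/-!
Every generator acts as `(x, y) ↦ (x + c, y + P(x))`, and such maps form a group in which the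
commutator of `(c, P)` and `(d, Q)` is `(0, (P - P(X + d)) + (Q(X + c) - Q))`. As `P(X + d) - P`
has smaller degree than `P`, the maps with `deg P < n` form a nilpotent group, and a finitely
generated subgroup lies in one of them. On the other hand the iterated commutator
`[s, [s, …, [s, aₙ]]]` (`n` times) is `(0, Δⁿ Xⁿ) = (0, n!)`, which is nontrivial in characteristic
zero, so no term of the lower central series of `Γ_∞` vanishes.
-/

open scoped commutatorElement

theorem Subgroup.isNilpotent_of_le {G : Type*} [Group G] {S T : Subgroup G} (hST : S ≤ T)
    [hT : Group.IsNilpotent T] : Group.IsNilpotent S := by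
  obtain ⟨n, hn⟩ := (T.isNilpotent_iff_lowerCentralSeries).mp hT
  refine isNilpotent_of_lowerCentralSeries_eq_bot (n := n) (eq_bot_iff.mpr ?_)
  exact hn ▸ lowerCentralSeries_mono n hST

theorem Subgroup.iterate_commutator_mem_lowerCentralSeries {G : Type*} [Group G]
    {S : Subgroup G} {x y : G} (hx : x ∈ S) (hy : y ∈ S) (j : ℕ) :
    (⁅x, ·⁆)^[j] y ∈ S.lowerCentralSeries j := by
  induction j with
  | zero => exact hy
  | succ j ih =>
    rw [Function.iterate_succ_apply', lowerCentralSeries_succ, commutator_comm]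
    exact commutator_mem_commutator hx ih

theorem Group.isNilpotent_of_fg_of_le_iSup {G : Type*} [Group G] {N : ℕ → Subgroup G}
    (hN : Monotone N) (hnil : ∀ n, Group.IsNilpotent (N n)) {C : Subgroup G}
    (hC : C ≤ ⨆ n, N n) (H : Subgroup C) (hH : Group.FG H) : Group.IsNilpotent H := by
  obtain ⟨S, rfl⟩ := (Group.fg_iff_subgroup_fg H).mp hH
  have hmem (g : C) : ∃ n, (g : G) ∈ N n :=
    (Subgroup.mem_iSup_of_directed hN.directed_le).mp (hC g.2)
  choose f hf using hmem
  obtain ⟨n, hn⟩ := (S.image f).exists_le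
  have hle : (Subgroup.closure (S : Set C)).map C.subtype ≤ N n := by
    rw [MonoidHom.map_closure, Subgroup.closure_le]
    rintro _ ⟨g, hg, rfl⟩
    exact hN (hn _ (Finset.mem_image_of_mem f hg)) (hf g)
  have := hnil n
  exact (isNilpotent_congr (Subgroup.equivMapOfInjective _ _ C.subtype_injective)).mpr
    (Subgroup.isNilpotent_of_le hle)

namespace Polynomial

variable {R : Type*} [CommRing R]

theorem taylor_sub_self_mem_degreeLT {n : ℕ} {P : R[X]} (hP : P ∈ degreeLT R n) (c : R) :
    taylor c P - P ∈ degreeLT R (n - 1) := by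
  rcases eq_or_ne P 0 with rfl | hP0
  · simp
  rw [mem_degreeLT] at hP ⊢
  rw [degree_eq_natDegree hP0, Nat.cast_lt] at hP
  calc (taylor c P - P).degree < P.degree :=
        degree_sub_lt_right (degree_taylor P c) hP0 (leadingCoeff_taylor c P)
    _ = P.natDegree := degree_eq_natDegree hP0
    _ ≤ (n - 1 : ℕ) := Nat.cast_le.mpr (by omega)

theorem eval_iterate_taylor_one_sub (P : R[X]) (j : ℕ) :
    ((fun Q => taylor 1 Q - Q)^[j] P).eval = (fwdDiff 1)^[j] P.eval := by
  induction j with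
  | zero => rfl
  | succ j ih =>
    rw [Function.iterate_succ_apply', Function.iterate_succ_apply', ← ih]
    funext x
    simp [fwdDiff, taylor_eval]

theorem eval_iterate_taylor_one_sub_X_pow (n : ℕ) (x : R) :
    ((fun Q => taylor 1 Q - Q)^[n] (X ^ n : R[X])).eval x = n.factorial := by
  have hXn : (X ^ n : R[X]).eval = fun r => r ^ n := by funext r; simp
  rw [congrFun (eval_iterate_taylor_one_sub _ n) x, hXn, fwdDiff_iter_eq_factorial]
  rfl

end Polynomial

namespace Cremona

open Polynomial

local notation "Cr₂(" K ")" => CremonaField K ≃ₐ[K] CremonaField K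

variable {K : Type*} [Field K]

theorem algEquiv_ext {σ τ : Cr₂(K)} (hx : σ (genX K) = τ (genX K))
    (hy : σ (genY K) = τ (genY K)) : σ = τ := by
  apply AlgEquiv.coe_toAlgHom_injective
  refine IsLocalization.algHom_ext (nonZeroDivisors (MvPolynomial (Fin 2) K)) ?_
  refine MvPolynomial.algHom_ext fun i => ?_
  fin_cases i
  exacts [hx, hy]

theorem transcendental_genX : Transcendental K (genX K) :=
  (transcendental_algebraMap_iff (IsFractionRing.injective _ _)).mpr
    (MvPolynomial.transcendental_X K 0)

def IsTriangular (c : K) (P : K[X]) (σ : Cr₂(K)) : Prop :=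
  σ (genX K) = genX K + algebraMap K _ c ∧ σ (genY K) = genY K + aeval (genX K) P

theorem map_aeval_genX {σ : Cr₂(K)} {c : K} (h : σ (genX K) = genX K + algebraMap K _ c)
    (Q : K[X]) : σ (aeval (genX K) Q) = aeval (genX K) (taylor c Q) := by
  rw [← aeval_algHom_apply, taylor_apply, aeval_comp, map_add, Polynomial.aeval_X,
    Polynomial.aeval_C]
  exact congrArg (Polynomial.aeval · Q) h

namespace IsTriangular

theorem one : IsTriangular (0 : K) 0 1 := by
  constructor <;> simp

theorem mul {σ τ : Cr₂(K)} {c d : K} {P Q : K[X]} (hσ : IsTriangular c P σ)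
    (hτ : IsTriangular d Q τ) : IsTriangular (c + d) (P + taylor c Q) (σ * τ) := by
  constructor
  · rw [AlgEquiv.mul_apply, hτ.1, map_add, hσ.1, AlgEquiv.commutes, map_add, add_assoc]
  · rw [AlgEquiv.mul_apply, hτ.2, map_add, hσ.2, map_aeval_genX hσ.1, map_add, add_assoc]

theorem inv {σ : Cr₂(K)} {c : K} {P : K[X]} (hσ : IsTriangular c P σ) :
    IsTriangular (-c) (-taylor (-c) P) σ⁻¹ := by
  have hσσ : ∀ z, σ (σ⁻¹ z) = z := fun z => by rw [← AlgEquiv.mul_apply, mul_inv_cancel]; rfl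
  constructor <;> apply σ.injective
  · rw [hσσ, map_add, hσ.1, AlgEquiv.commutes, map_neg]
    ring
  · rw [hσσ, map_add, hσ.2, map_neg, map_neg, map_aeval_genX hσ.1, taylor_taylor, add_neg_cancel,
      taylor_zero]
    ring

theorem commutator {σ τ : Cr₂(K)} {c d : K} {P Q : K[X]} (hσ : IsTriangular c P σ)
    (hτ : IsTriangular d Q τ) :
    IsTriangular 0 ((P - taylor d P) + (taylor c Q - Q)) ⁅σ, τ⁆ := by
  have h := ((hσ.mul hτ).mul hσ.inv).mul hτ.inv
  rw [commutatorElement_def]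
  convert h using 1
  · ring
  · simp only [map_neg, taylor_taylor, add_neg_cancel_comm, add_neg_cancel,
      taylor_zero]
    ring

theorem iterate_commutator {s g : Cr₂(K)} {Q : K[X]} (hs : IsTriangular 1 0 s)
    (hg : IsTriangular 0 Q g) (j : ℕ) :
    IsTriangular 0 ((fun P => taylor 1 P - P)^[j] Q) ((⁅s, ·⁆)^[j] g) := by
  induction j with
  | zero => exact hg
  | succ j ih =>
    rw [Function.iterate_succ_apply', Function.iterate_succ_apply']
    simpa using hs.commutator ih

theorem eq_one {σ : Cr₂(K)} (h : IsTriangular 0 0 σ) : σ = 1 :=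
  algEquiv_ext (by simpa using h.1) (by simpa using h.2)

theorem eq_zero_of_one {c : K} {P : K[X]} (h : IsTriangular c P 1) : P = 0 :=
  transcendental_iff.mp transcendental_genX P (by simpa using h.2)

end IsTriangular

variable (K) in
def triangularLT (n : ℕ) : Subgroup Cr₂(K) where
  carrier := {σ | ∃ c, ∃ P ∈ degreeLT K n, IsTriangular c P σ}
  one_mem' := ⟨0, 0, zero_mem _, .one⟩
  mul_mem' := by
    rintro σ τ ⟨c, P, hP, hσ⟩ ⟨d, Q, hQ, hτ⟩
    exact ⟨_, _, add_mem hP (taylor_mem_degreeLT.mpr hQ), hσ.mul hτ⟩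
  inv_mem' := by
    rintro σ ⟨c, P, hP, hσ⟩
    exact ⟨_, _, neg_mem (taylor_mem_degreeLT.mpr hP), hσ.inv⟩

variable (K) in
def elementaryLT (n : ℕ) : Subgroup Cr₂(K) where
  carrier := {σ | ∃ P ∈ degreeLT K n, IsTriangular 0 P σ}
  one_mem' := ⟨0, zero_mem _, .one⟩
  mul_mem' := by
    rintro σ τ ⟨P, hP, hσ⟩ ⟨Q, hQ, hτ⟩
    exact ⟨_, add_mem hP hQ, by simpa using hσ.mul hτ⟩
  inv_mem' := by
    rintro σ ⟨P, hP, hσ⟩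
    exact ⟨_, neg_mem hP, by simpa using hσ.inv⟩

theorem triangularLT_mono : Monotone (triangularLT K) :=
  fun _ _ hmn _ ⟨c, P, hP, hσ⟩ => ⟨c, P, degreeLT_mono hmn hP, hσ⟩

theorem elementaryLT_zero : elementaryLT K 0 = ⊥ := by
  refine eq_bot_iff.mpr fun σ ⟨P, hP, hσ⟩ => ?_
  obtain rfl : P = 0 := by simpa [mem_degreeLT] using hP
  exact hσ.eq_one

theorem commutator_mem_elementaryLT {n : ℕ} {σ τ : Cr₂(K)} (hσ : σ ∈ triangularLT K n)
    (hτ : τ ∈ triangularLT K n) : ⁅σ, τ⁆ ∈ elementaryLT K (n - 1) := by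
  obtain ⟨c, P, hP, hσ⟩ := hσ
  obtain ⟨d, Q, hQ, hτ⟩ := hτ
  refine ⟨_, add_mem ?_ (taylor_sub_self_mem_degreeLT hQ c), hσ.commutator hτ⟩
  simpa using neg_mem (taylor_sub_self_mem_degreeLT hP d)

theorem commutator_mem_elementaryLT_pred {k n : ℕ} {σ τ : Cr₂(K)} (hσ : σ ∈ elementaryLT K k)
    (hτ : τ ∈ triangularLT K n) : ⁅σ, τ⁆ ∈ elementaryLT K (k - 1) := by
  obtain ⟨P, hP, hσ⟩ := hσ
  obtain ⟨d, Q, -, hτ⟩ := hτ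
  refine ⟨_, ?_, hσ.commutator hτ⟩
  simpa using neg_mem (taylor_sub_self_mem_degreeLT hP d)

theorem lowerCentralSeries_triangularLT_le (n j : ℕ) :
    (triangularLT K n).lowerCentralSeries (j + 1) ≤ elementaryLT K (n - 1 - j) := by
  induction j with
  | zero =>
    exact Subgroup.commutator_le.mpr fun σ hσ τ hτ => commutator_mem_elementaryLT hσ hτ
  | succ j ih =>
    exact Subgroup.commutator_le.mpr fun σ hσ τ hτ =>
      commutator_mem_elementaryLT_pred (ih hσ) hτ

theorem isNilpotent_triangularLT (n : ℕ) : Group.IsNilpotent (triangularLT K n) := by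
  refine Subgroup.isNilpotent_of_lowerCentralSeries_eq_bot (n := n + 1) (eq_bot_iff.mpr ?_)
  simpa [elementaryLT_zero] using lowerCentralSeries_triangularLT_le (K := K) n n

theorem closure_le_iSup_triangularLT {S : Set Cr₂(K)}
    (hS : ∀ σ ∈ S, ∃ c P, IsTriangular c P σ) :
    Subgroup.closure S ≤ ⨆ n, triangularLT K n := by
  refine Subgroup.closure_le _ |>.mpr fun σ hσ => ?_
  obtain ⟨c, P, h⟩ := hS σ hσ
  refine Subgroup.mem_iSup_of_mem (P.natDegree + 1) ⟨c, P, ?_, h⟩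
  exact mem_degreeLT.mpr
    (degree_le_natDegree.trans_lt (by exact_mod_cast P.natDegree.lt_succ_self))

theorem not_isNilpotent_of_mem_of_forall_mem [CharZero K] {s : Cr₂(K)} {a : ℕ → Cr₂(K)}
    (hs : IsTriangular 1 0 s) (ha : ∀ k, IsTriangular 0 (Polynomial.X ^ k) (a k))
    {C : Subgroup Cr₂(K)} (hsC : s ∈ C) (haC : ∀ k, a k ∈ C) : ¬ Group.IsNilpotent C := by
  intro hC
  obtain ⟨n, hn⟩ := (C.isNilpotent_iff_lowerCentralSeries).mp hC
  have hmem := Subgroup.iterate_commutator_mem_lowerCentralSeries hsC (haC n) n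
  rw [hn, Subgroup.mem_bot] at hmem
  have hzero := (hmem ▸ hs.iterate_commutator (ha n) n).eq_zero_of_one
  have h0 := congrArg (eval 0) hzero
  rw [eval_iterate_taylor_one_sub_X_pow, Polynomial.eval_zero] at h0
  exact Nat.cast_ne_zero.mpr n.factorial_ne_zero h0

end Cremona

theorem statement8 (K : Type*) [Field K] [CharZero K]
    (s : CremonaField K ≃ₐ[K] CremonaField K)
    (hsx : s (genX K) = genX K + 1) (hsy : s (genY K) = genY K)
    (a : ℕ → (CremonaField K ≃ₐ[K] CremonaField K))
    (ha : ∀ k : ℕ, (a k) (genX K) = genX K ∧ (a k) (genY K) = genY K + genX K ^ k) :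
    (∀ H : Subgroup (Subgroup.closure ({s} ∪ Set.range a) :
        Subgroup (CremonaField K ≃ₐ[K] CremonaField K)),
      Group.FG H → Group.IsNilpotent H) ∧
    ¬ Group.IsNilpotent (Subgroup.closure ({s} ∪ Set.range a) :
        Subgroup (CremonaField K ≃ₐ[K] CremonaField K)) := by
  have hs : Cremona.IsTriangular (1 : K) 0 s := ⟨by simp [hsx], by simp [hsy]⟩
  have ha' (k : ℕ) : Cremona.IsTriangular 0 (Polynomial.X ^ k) (a k) :=
    ⟨by simp [(ha k).1], by simp [(ha k).2]⟩
  refine ⟨Group.isNilpotent_of_fg_of_le_iSup Cremona.triangularLT_mono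
    Cremona.isNilpotent_triangularLT (Cremona.closure_le_iSup_triangularLT ?_), ?_⟩
  · rintro σ (rfl | ⟨k, rfl⟩)
    exacts [⟨1, 0, hs⟩, ⟨0, _, ha' k⟩]
  · exact Cremona.not_isNilpotent_of_mem_of_forall_mem hs ha' (Subgroup.subset_closure (.inl rfl))
      fun k => Subgroup.subset_closure (.inr ⟨k, rfl⟩)
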